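/- Let Q ∈ M_{M×N}(ℂ) be a matrix all of whose entries have modulus 1, and let w = e^{2πi/M}, z = e^{2πi/N}. Then the deformed Fourier matrix H = F_M ⊗_Q F_N ∈ M_{MN}(ℂ), defined by H_{(i,a),(j,b)} = Q_{ib}·w^{ij}·z^{ab} with i,j ∈ ℤ/Mℤ and a,b ∈ ℤ/Nℤ, is a complex Hadamard matrix. -/

import Mathlib

open Matrix BigOperators ComplexConjugate

/-- `H` is a complex Hadamard matrix: all entries have modulus one, and the rows are
pairwise orthogonal. -/
def IsHadamard {I : Type*} [Fintype I] [DecidableEq I] (H : Matrix I I ℂ) : Prop :=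
  (∀ i j, ‖H i j‖ = 1) ∧
  (∀ i j, ∑ k, H i k * conj (H j k) = if i = j then (Fintype.card I : ℂ) else 0)

/-- The deformed Fourier matrix (Diţă deformation) `F_M ⊗_Q F_N`, with entries
`H_{(i,a),(j,b)} = Q_{ib}·w^{ij}·z^{ab}`, `w = e^{2πi/M}`, `z = e^{2πi/N}`. -/
noncomputable def defFourier (M N : ℕ) (Q : Matrix (ZMod M) (ZMod N) ℂ) :
    Matrix (ZMod M × ZMod N) (ZMod M × ZMod N) ℂ :=
  fun p q => Q p.1 q.2 *
    Complex.exp (2 * Real.pi * Complex.I * ((p.1.val : ℂ) * (q.1.val : ℂ)) / M) *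
    Complex.exp (2 * Real.pi * Complex.I * ((p.2.val : ℂ) * (q.2.val : ℂ)) / N)

/-! In `H_{(i,a),(j,b)} = Q_{ib} K_{ij} L_{ab}` with Hadamard matrices `K`, `L`, the inner product
of rows `(i,a)` and `(i',a')` factors as `∑_j K_{ij} conj K_{i'j}` times a sum over `b`. The first
factor vanishes unless `i = i'`, and then the unimodular factors `Q_{ib} conj Q_{ib} = 1` drop out,
leaving the inner product of rows `a`, `a'` of `L`. The Fourier matrix `F_N` is Hadamard because
`j ↦ e^{2πij/N}` is a primitive additive character of `ZMod N`. -/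

section AddChar

variable {R : Type*} [CommRing R] [Fintype R] [DecidableEq R] {ψ : AddChar R ℂ}

theorem AddChar.sum_apply_mul_conj_apply_mul (hψ : ψ.IsPrimitive) (a b : R) :
    ∑ x, ψ (a * x) * conj (ψ (b * x)) = if a = b then (Fintype.card R : ℂ) else 0 := by
  simp_rw [← AddChar.map_neg_eq_conj, ← AddChar.map_add_eq_mul, ← sub_eq_add_neg, ← sub_mul,
    mul_comm (a - b), AddChar.sum_mulShift _ hψ, sub_eq_zero, Nat.cast_ite, Nat.cast_zero]

theorem isHadamard_of_isPrimitive (hψ : ψ.IsPrimitive) :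
    _root_.IsHadamard (Matrix.of fun a b => ψ (a * b)) :=
  ⟨fun _ _ => AddChar.norm_apply _ _, AddChar.sum_apply_mul_conj_apply_mul hψ⟩

end AddChar

def ditaProduct {ι κ : Type*} (K : Matrix ι ι ℂ) (L : Matrix κ κ ℂ) (Q : Matrix ι κ ℂ) :
    Matrix (ι × κ) (ι × κ) ℂ :=
  Matrix.of fun p q => Q p.1 q.2 * K p.1 q.1 * L p.2 q.2

theorem isHadamard_ditaProduct {ι κ : Type*} [Fintype ι] [DecidableEq ι] [Fintype κ]
    [DecidableEq κ] {K : Matrix ι ι ℂ} {L : Matrix κ κ ℂ} {Q : Matrix ι κ ℂ}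
    (hK : _root_.IsHadamard K) (hL : _root_.IsHadamard L) (hQ : ∀ i b, ‖Q i b‖ = 1) :
    _root_.IsHadamard (ditaProduct K L Q) := by
  refine ⟨fun p q => by simp [ditaProduct, hQ, hK.1, hL.1], ?_⟩
  rintro ⟨i, a⟩ ⟨i', a'⟩
  have hsplit : ∑ q, ditaProduct K L Q (i, a) q * conj (ditaProduct K L Q (i', a') q) =
      ∑ b, Q i b * conj (Q i' b) * L a b * conj (L a' b) * ∑ j, K i j * conj (K i' j) := by
    rw [Fintype.sum_prod_type_right]
    refine Finset.sum_congr rfl fun b _ => ?_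
    rw [Finset.mul_sum]
    refine Finset.sum_congr rfl fun j _ => ?_
    simp only [ditaProduct, Matrix.of_apply, map_mul]
    ring
  rw [hsplit]
  simp_rw [hK.2]
  rcases eq_or_ne i i' with rfl | hi
  · have hQQ : ∀ b, Q i b * conj (Q i b) = 1 := fun b => by
      rw [Complex.mul_conj', hQ]; norm_num
    simp_rw [hQQ, one_mul, if_true, ← Finset.sum_mul, hL.2]
    simp [Fintype.card_prod, Prod.ext_iff, mul_comm]
  · simp [hi]

noncomputable def fourierMatrix (N : ℕ) [NeZero N] : Matrix (ZMod N) (ZMod N) ℂ :=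
  Matrix.of fun i j => ZMod.stdAddChar (i * j)

theorem fourierMatrix_apply {N : ℕ} [NeZero N] (i j : ZMod N) :
    fourierMatrix N i j =
      Complex.exp (2 * Real.pi * Complex.I * ((i.val : ℂ) * (j.val : ℂ)) / N) := by
  have hij : i * j = ((i.val * j.val : ℕ) : ZMod N) := by simp
  rw [fourierMatrix, Matrix.of_apply, hij, ZMod.stdAddChar_apply, ZMod.toCircle_natCast]
  push_cast
  ring_nf

theorem isHadamard_fourierMatrix (N : ℕ) [NeZero N] : _root_.IsHadamard (fourierMatrix N) :=
  isHadamard_of_isPrimitive (ZMod.isPrimitive_stdAddChar N)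

theorem defFourier_eq_ditaProduct (M N : ℕ) [NeZero M] [NeZero N]
    (Q : Matrix (ZMod M) (ZMod N) ℂ) :
    defFourier M N Q = ditaProduct (fourierMatrix M) (fourierMatrix N) Q := by
  ext p q
  simp only [defFourier, ditaProduct, Matrix.of_apply, fourierMatrix_apply]

/-- if all entries of the parameter matrix `Q ∈ M_{M×N}(ℂ)` have modulus
one, then the deformed Fourier matrix `F_M ⊗_Q F_N` is a complex Hadamard matrix. -/
theorem defFourier_hadamard (M N : ℕ) [NeZero M] [NeZero N]
    (Q : Matrix (ZMod M) (ZMod N) ℂ) (hQ : ∀ i a, ‖Q i a‖ = 1) :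
    _root_.IsHadamard (defFourier M N Q) := by
  rw [defFourier_eq_ditaProduct]
  exact isHadamard_ditaProduct (isHadamard_fourierMatrix M) (isHadamard_fourierMatrix N) hQ
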